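/- Fix θ > 0 and t > 0. Then the equilibrium density f_t integrates to one: ∫_ℝ f_t(x) dx = 1; i.e. μ^t is a probability measure supported on [0, θ(1+√t)²]. -/

import Mathlib

open Filter MeasureTheory

attribute [local instance] Classical.propDecidable

noncomputable section

/-- The equilibrium density `f_t` of the measure `μ^t`, with `arccot` realized as
`π/2 - arctan` (values in `(0, π)`). -/
def eqDensity (θ t : ℝ) (x : ℝ) : ℝ :=
  if θ * (Real.sqrt t - 1) ^ 2 < x ∧ x < θ * (Real.sqrt t + 1) ^ 2 then
    (θ * Real.pi)⁻¹ *
      (Real.pi / 2 -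
        Real.arctan ((x + θ * (t - 1)) / Real.sqrt (4 * θ * t * x - (x + θ * (t - 1)) ^ 2)))
  else if t < 1 ∧ 0 ≤ x ∧ x ≤ θ * (Real.sqrt t - 1) ^ 2 then θ⁻¹
  else 0

/-- antiderivative of `π θ · eqDensity` on the bulk interval -/
def eqF (θ t x : ℝ) : ℝ :=
  x * (Real.pi / 2 - Real.arcsin ((x + θ * (t - 1)) / (2 * Real.sqrt (θ * t * x))))
    + θ * Real.arcsin ((x - θ * (t + 1)) / (2 * θ * Real.sqrt t))
    - Real.sqrt (4 * θ * t * x - (x + θ * (t - 1)) ^ 2) / 2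

lemma eqQ_pos {θ t x : ℝ} (hθ : 0 < θ) (ht : 0 < t)
    (hx : x ∈ Set.Ioo (θ * (Real.sqrt t - 1) ^ 2) (θ * (Real.sqrt t + 1) ^ 2)) :
    0 < 4 * θ * t * x - (x + θ * (t - 1)) ^ 2 := by
  have hr2 : Real.sqrt t ^ 2 = t := Real.sq_sqrt ht.le
  have key : 4 * θ * t * x - (x + θ * (t - 1)) ^ 2
      = (θ * (Real.sqrt t + 1) ^ 2 - x) * (x - θ * (Real.sqrt t - 1) ^ 2) := by
    linear_combination (θ ^ 2 * (t + Real.sqrt t ^ 2 - 2) - 2 * θ * x) * hr2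
  rw [key]
  exact mul_pos (by linarith [hx.2]) (by linarith [hx.1])

lemma eqF_hasDerivAt {θ t x : ℝ} (hθ : 0 < θ) (ht : 0 < t)
    (hx : x ∈ Set.Ioo (θ * (Real.sqrt t - 1) ^ 2) (θ * (Real.sqrt t + 1) ^ 2)) :
    HasDerivAt (eqF θ t)
      (Real.pi / 2 -
        Real.arctan ((x + θ * (t - 1)) / Real.sqrt (4 * θ * t * x - (x + θ * (t - 1)) ^ 2))) x := by
  have hr : 0 < Real.sqrt t := Real.sqrt_pos.2 ht
  have hr2 : Real.sqrt t ^ 2 = t := Real.sq_sqrt ht.le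
  have ha : 0 ≤ θ * (Real.sqrt t - 1) ^ 2 := by positivity
  have hxpos : 0 < x := lt_of_le_of_lt ha hx.1
  have hQ : 0 < 4 * θ * t * x - (x + θ * (t - 1)) ^ 2 := eqQ_pos hθ ht hx
  set s : ℝ := Real.sqrt (4 * θ * t * x - (x + θ * (t - 1)) ^ 2) with hs_def
  have hs : 0 < s := Real.sqrt_pos.2 hQ
  have hs2 : s ^ 2 = 4 * θ * t * x - (x + θ * (t - 1)) ^ 2 := Real.sq_sqrt hQ.le
  -- the arctan-version of eqF
  set F1 : ℝ → ℝ := fun y =>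
    y * (Real.pi / 2 - Real.arctan ((y + θ * (t - 1)) / Real.sqrt (4 * θ * t * y - (y + θ * (t - 1)) ^ 2)))
      + θ * Real.arcsin ((y - θ * (t + 1)) / (2 * θ * Real.sqrt t))
      - Real.sqrt (4 * θ * t * y - (y + θ * (t - 1)) ^ 2) / 2 with hF1
  have heq : ∀ y ∈ Set.Ioo (θ * (Real.sqrt t - 1) ^ 2) (θ * (Real.sqrt t + 1) ^ 2),
      eqF θ t y = F1 y := by
    intro y hy
    have hQy : 0 < 4 * θ * t * y - (y + θ * (t - 1)) ^ 2 := eqQ_pos hθ ht hy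
    have hypos : 0 < y := lt_of_le_of_lt ha hy.1
    have hsy : 0 < Real.sqrt (4 * θ * t * y - (y + θ * (t - 1)) ^ 2) := Real.sqrt_pos.2 hQy
    have hsty : 0 < Real.sqrt (θ * t * y) := Real.sqrt_pos.2 (by positivity)
    have key : Real.arcsin ((y + θ * (t - 1)) / (2 * Real.sqrt (θ * t * y)))
        = Real.arctan ((y + θ * (t - 1)) / Real.sqrt (4 * θ * t * y - (y + θ * (t - 1)) ^ 2)) := by
      rw [Real.arctan_eq_arcsin]
      congr 1
      have h1 : 1 + ((y + θ * (t - 1)) / Real.sqrt (4 * θ * t * y - (y + θ * (t - 1)) ^ 2)) ^ 2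
          = (4 * θ * t * y) / (Real.sqrt (4 * θ * t * y - (y + θ * (t - 1)) ^ 2)) ^ 2 := by
        rw [div_pow, Real.sq_sqrt hQy.le]
        rw [eq_div_iff hQy.ne', add_mul, div_mul_cancel₀ _ hQy.ne']; ring
      have h4 : Real.sqrt (4 * θ * t * y) = 2 * Real.sqrt (θ * t * y) := by
        rw [show (4 : ℝ) * θ * t * y = 2 ^ 2 * (θ * t * y) by ring,
          Real.sqrt_mul (by positivity), Real.sqrt_sq (by norm_num)]
      rw [h1, Real.sqrt_div (by positivity), Real.sqrt_sq hsy.le, h4]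
      field_simp
      rw [mul_div_assoc, div_self (ne_of_gt (by rw [show y * θ * t * 4 = 4 * θ * t * y by ring]; exact hsy)), mul_one]
    simp only [eqF, key, F1]
  -- differentiate F1
  have hQ' : HasDerivAt (fun y : ℝ => 4 * θ * t * y - (y + θ * (t - 1)) ^ 2)
      (4 * θ * t - 2 * (x + θ * (t - 1))) x := by
    have h1 : HasDerivAt (fun y : ℝ => 4 * θ * t * y) (4 * θ * t) x := by
      simpa using (hasDerivAt_id x).const_mul (4 * θ * t)
    have h2 : HasDerivAt (fun y : ℝ => (y + θ * (t - 1)) ^ 2) (2 * (x + θ * (t - 1))) x := by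
      have := ((hasDerivAt_id x).add_const (θ * (t - 1))).fun_pow 2
      simpa using this
    exact h1.sub h2
  have hsq : HasDerivAt (fun y : ℝ => Real.sqrt (4 * θ * t * y - (y + θ * (t - 1)) ^ 2))
      (1 / (2 * s) * (4 * θ * t - 2 * (x + θ * (t - 1)))) x :=
    (Real.hasDerivAt_sqrt hQ.ne').comp x hQ'
  have hg : HasDerivAt
      (fun y : ℝ => (y + θ * (t - 1)) / Real.sqrt (4 * θ * t * y - (y + θ * (t - 1)) ^ 2))
      ((1 * s - (x + θ * (t - 1)) * (1 / (2 * s) * (4 * θ * t - 2 * (x + θ * (t - 1))))) / s ^ 2)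
      x :=
    ((hasDerivAt_id x).add_const (θ * (t - 1))).div hsq hs.ne'
  have hg2 : HasDerivAt
      (fun y : ℝ => (y + θ * (t - 1)) / Real.sqrt (4 * θ * t * y - (y + θ * (t - 1)) ^ 2))
      (2 * θ * t * (x - θ * (t - 1)) / s ^ 3) x := by
    convert hg using 1
    have hnum : 1 * s - (x + θ * (t - 1)) * (1 / (2 * s) * (4 * θ * t - 2 * (x + θ * (t - 1))))
        = 2 * θ * t * (x - θ * (t - 1)) / s := by
      rw [eq_div_iff hs.ne']
      field_simp
      linear_combination 2 * hs2
    rw [hnum, div_div]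
    congr 1
    ring
  have harctan : HasDerivAt
      (fun y : ℝ => Real.arctan ((y + θ * (t - 1)) / Real.sqrt (4 * θ * t * y - (y + θ * (t - 1)) ^ 2)))
      ((x - θ * (t - 1)) / (2 * x * s)) x := by
    convert hg2.arctan using 1
    rw [div_pow, Real.sq_sqrt hQ.le]
    have h1 : 1 + (x + θ * (t - 1)) ^ 2 / (4 * θ * t * x - (x + θ * (t - 1)) ^ 2)
        = 4 * θ * t * x / (4 * θ * t * x - (x + θ * (t - 1)) ^ 2) := by
      rw [eq_div_iff hQ.ne', add_mul, div_mul_cancel₀ _ hQ.ne']; ring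
    rw [h1]
    rw [one_div_div, ← hs2]
    field_simp
    ring
  -- the arcsin term
  have hub1 : (x - θ * (t + 1)) / (2 * θ * Real.sqrt t) < 1 := by
    rw [div_lt_one (by positivity)]
    nlinarith [hx.2, hr2]
  have hub2 : (-1 : ℝ) < (x - θ * (t + 1)) / (2 * θ * Real.sqrt t) := by
    rw [lt_div_iff₀ (by positivity)]
    nlinarith [hx.1, hr2]
  have hinner : HasDerivAt (fun y : ℝ => (y - θ * (t + 1)) / (2 * θ * Real.sqrt t))
      (1 / (2 * θ * Real.sqrt t)) x := by
    simpa using ((hasDerivAt_id x).sub_const (θ * (t + 1))).div_const (2 * θ * Real.sqrt t)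
  have harcsin : HasDerivAt (fun y : ℝ => Real.arcsin ((y - θ * (t + 1)) / (2 * θ * Real.sqrt t)))
      (1 / Real.sqrt (1 - ((x - θ * (t + 1)) / (2 * θ * Real.sqrt t)) ^ 2)
        * (1 / (2 * θ * Real.sqrt t))) x :=
    HasDerivAt.comp x (Real.hasDerivAt_arcsin hub2.ne' hub1.ne) hinner
  have hsu : Real.sqrt (1 - ((x - θ * (t + 1)) / (2 * θ * Real.sqrt t)) ^ 2)
      = s / (2 * θ * Real.sqrt t) := by
    have e : 1 - ((x - θ * (t + 1)) / (2 * θ * Real.sqrt t)) ^ 2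
        = (s / (2 * θ * Real.sqrt t)) ^ 2 := by
      rw [div_pow, div_pow, hs2]
      rw [show (2 * θ * Real.sqrt t) ^ 2 = 4 * θ ^ 2 * t by
        rw [mul_pow, mul_pow, Real.sq_sqrt ht.le]; ring]
      field_simp
      ring
    rw [e, Real.sqrt_sq (by positivity)]
  -- assemble
  have hA : HasDerivAt (fun y : ℝ => y * (Real.pi / 2 -
      Real.arctan ((y + θ * (t - 1)) / Real.sqrt (4 * θ * t * y - (y + θ * (t - 1)) ^ 2))))
      (1 * (Real.pi / 2 -
        Real.arctan ((x + θ * (t - 1)) / Real.sqrt (4 * θ * t * x - (x + θ * (t - 1)) ^ 2)))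
        + x * (0 - (x - θ * (t - 1)) / (2 * x * s))) x :=
    (hasDerivAt_id x).mul ((hasDerivAt_const x (Real.pi / 2)).sub harctan)
  have hB : HasDerivAt (fun y : ℝ => θ * Real.arcsin ((y - θ * (t + 1)) / (2 * θ * Real.sqrt t)))
      (θ * (1 / Real.sqrt (1 - ((x - θ * (t + 1)) / (2 * θ * Real.sqrt t)) ^ 2)
        * (1 / (2 * θ * Real.sqrt t)))) x := harcsin.const_mul θ
  have hC : HasDerivAt (fun y : ℝ => Real.sqrt (4 * θ * t * y - (y + θ * (t - 1)) ^ 2) / 2)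
      (1 / (2 * s) * (4 * θ * t - 2 * (x + θ * (t - 1))) / 2) x := hsq.div_const 2
  have htot : HasDerivAt F1
      (1 * (Real.pi / 2 -
        Real.arctan ((x + θ * (t - 1)) / Real.sqrt (4 * θ * t * x - (x + θ * (t - 1)) ^ 2)))
        + x * (0 - (x - θ * (t - 1)) / (2 * x * s))
        + θ * (1 / Real.sqrt (1 - ((x - θ * (t + 1)) / (2 * θ * Real.sqrt t)) ^ 2)
          * (1 / (2 * θ * Real.sqrt t)))
        - 1 / (2 * s) * (4 * θ * t - 2 * (x + θ * (t - 1))) / 2) x := (hA.add hB).sub hC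
  have hfin : HasDerivAt (eqF θ t)
      (1 * (Real.pi / 2 -
        Real.arctan ((x + θ * (t - 1)) / Real.sqrt (4 * θ * t * x - (x + θ * (t - 1)) ^ 2)))
        + x * (0 - (x - θ * (t - 1)) / (2 * x * s))
        + θ * (1 / Real.sqrt (1 - ((x - θ * (t + 1)) / (2 * θ * Real.sqrt t)) ^ 2)
          * (1 / (2 * θ * Real.sqrt t)))
        - 1 / (2 * s) * (4 * θ * t - 2 * (x + θ * (t - 1))) / 2) x := by
    refine htot.congr_of_eventuallyEq ?_
    filter_upwards [isOpen_Ioo.mem_nhds hx] with y hy using heq y hy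
  convert hfin using 1
  rw [hsu, ← hs_def]
  rw [one_div_div]
  field_simp
  ring

lemma eqF_right (θ r : ℝ) (hθ : 0 < θ) (hr : 0 < r) :
    eqF θ (r ^ 2) (θ * (r + 1) ^ 2) = θ * Real.pi / 2 := by
  have h3 : 4 * θ * r ^ 2 * (θ * (r + 1) ^ 2) - (θ * (r + 1) ^ 2 + θ * (r ^ 2 - 1)) ^ 2 = 0 := by
    ring
  have hsq : Real.sqrt (θ * r ^ 2 * (θ * (r + 1) ^ 2)) = θ * r * (r + 1) := by
    rw [show θ * r ^ 2 * (θ * (r + 1) ^ 2) = (θ * r * (r + 1)) ^ 2 by ring,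
      Real.sqrt_sq (by positivity)]
  have h1 : (θ * (r + 1) ^ 2 + θ * (r ^ 2 - 1)) / (2 * Real.sqrt (θ * r ^ 2 * (θ * (r + 1) ^ 2))) = 1 := by
    rw [hsq, show θ * (r + 1) ^ 2 + θ * (r ^ 2 - 1) = 2 * (θ * r * (r + 1)) by ring]
    field_simp
  have h2 : (θ * (r + 1) ^ 2 - θ * (r ^ 2 + 1)) / (2 * θ * Real.sqrt (r ^ 2)) = 1 := by
    rw [Real.sqrt_sq hr.le, show θ * (r + 1) ^ 2 - θ * (r ^ 2 + 1) = 2 * θ * r by ring]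
    field_simp
  unfold eqF
  rw [h1, h2, Real.arcsin_one, h3, Real.sqrt_zero]
  ring

lemma eqF_left_ge (θ r : ℝ) (hθ : 0 < θ) (hr : 1 ≤ r) :
    eqF θ (r ^ 2) (θ * (r - 1) ^ 2) = -(θ * Real.pi / 2) := by
  rcases eq_or_lt_of_le hr with h | h
  · subst h
    have : (1:ℝ) * (1 - 1) ^ 2 = 0 := by norm_num
    simp only [eqF, one_pow]
    norm_num
    rw [show -(θ * 2) / (2 * θ) = -1 by rw [div_eq_iff (by positivity : (2*θ) ≠ 0)]; ring,
      Real.arcsin_neg_one]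
    ring
  · have hr0 : 0 < r := by linarith
    have h3 : 4 * θ * r ^ 2 * (θ * (r - 1) ^ 2) - (θ * (r - 1) ^ 2 + θ * (r ^ 2 - 1)) ^ 2 = 0 := by
      ring
    have hsq : Real.sqrt (θ * r ^ 2 * (θ * (r - 1) ^ 2)) = θ * r * (r - 1) := by
      rw [show θ * r ^ 2 * (θ * (r - 1) ^ 2) = (θ * r * (r - 1)) ^ 2 by ring,
        Real.sqrt_sq (by nlinarith)]
    have h1 : (θ * (r - 1) ^ 2 + θ * (r ^ 2 - 1)) / (2 * Real.sqrt (θ * r ^ 2 * (θ * (r - 1) ^ 2))) = 1 := by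
      rw [hsq, show θ * (r - 1) ^ 2 + θ * (r ^ 2 - 1) = 2 * (θ * r * (r - 1)) by ring]
      exact div_self (by nlinarith [mul_pos (mul_pos hθ hr0) (by linarith : (0:ℝ) < r - 1)])
    have h2 : (θ * (r - 1) ^ 2 - θ * (r ^ 2 + 1)) / (2 * θ * Real.sqrt (r ^ 2)) = -1 := by
      rw [Real.sqrt_sq hr0.le, show θ * (r - 1) ^ 2 - θ * (r ^ 2 + 1) = -(2 * θ * r) by ring]
      rw [neg_div, div_self (by positivity)]
    unfold eqF
    rw [h1, h2, Real.arcsin_one, Real.arcsin_neg_one, h3, Real.sqrt_zero]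
    ring

lemma eqF_left_lt (θ r : ℝ) (hθ : 0 < θ) (hr0 : 0 < r) (hr : r < 1) :
    eqF θ (r ^ 2) (θ * (r - 1) ^ 2) = θ * (r - 1) ^ 2 * Real.pi - θ * Real.pi / 2 := by
  have h3 : 4 * θ * r ^ 2 * (θ * (r - 1) ^ 2) - (θ * (r - 1) ^ 2 + θ * (r ^ 2 - 1)) ^ 2 = 0 := by
    ring
  have hsq : Real.sqrt (θ * r ^ 2 * (θ * (r - 1) ^ 2)) = θ * r * (1 - r) := by
    rw [show θ * r ^ 2 * (θ * (r - 1) ^ 2) = (θ * r * (1 - r)) ^ 2 by ring,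
      Real.sqrt_sq (mul_nonneg (mul_nonneg hθ.le hr0.le) (by linarith))]
  have h1 : (θ * (r - 1) ^ 2 + θ * (r ^ 2 - 1)) / (2 * Real.sqrt (θ * r ^ 2 * (θ * (r - 1) ^ 2))) = -1 := by
    rw [hsq, show θ * (r - 1) ^ 2 + θ * (r ^ 2 - 1) = -(2 * (θ * r * (1 - r))) by ring]
    rw [neg_div, div_self (by nlinarith [mul_pos (mul_pos hθ hr0) (by linarith : (0:ℝ) < 1 - r)])]
  have h2 : (θ * (r - 1) ^ 2 - θ * (r ^ 2 + 1)) / (2 * θ * Real.sqrt (r ^ 2)) = -1 := by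
    rw [Real.sqrt_sq hr0.le, show θ * (r - 1) ^ 2 - θ * (r ^ 2 + 1) = -(2 * θ * r) by ring]
    rw [neg_div, div_self (by positivity)]
  unfold eqF
  rw [h1, h2, Real.arcsin_neg_one, h3, Real.sqrt_zero]
  ring

lemma eqF_continuousOn {θ t : ℝ} (hθ : 0 < θ) (ht : 0 < t) :
    ContinuousOn (eqF θ t)
      (Set.Icc (θ * (Real.sqrt t - 1) ^ 2) (θ * (Real.sqrt t + 1) ^ 2)) := by
  have harc : ContinuousOn
      (fun x => Real.arcsin ((x + θ * (t - 1)) / (2 * Real.sqrt (θ * t * x))))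
      (Set.Icc (θ * (Real.sqrt t - 1) ^ 2) (θ * (Real.sqrt t + 1) ^ 2)) := by
    by_cases h1 : t = 1
    · subst h1
      have heq : Set.EqOn (fun x => Real.arcsin ((x + θ * ((1:ℝ) - 1)) / (2 * Real.sqrt (θ * 1 * x))))
          (fun x => Real.arcsin (Real.sqrt x / (2 * Real.sqrt θ)))
          (Set.Icc (θ * (Real.sqrt 1 - 1) ^ 2) (θ * (Real.sqrt 1 + 1) ^ 2)) := by
        intro x hx
        have hx0 : 0 ≤ x := by
          have := hx.1
          rw [Real.sqrt_one] at this
          simpa using this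
        simp only
        congr 1
        rw [show θ * 1 * x = θ * x by ring, Real.sqrt_mul hθ.le, show x + θ * ((1:ℝ) - 1) = x by ring]
        rcases eq_or_lt_of_le hx0 with h | h
        · rw [← h]; simp
        · rw [div_eq_div_iff (by positivity) (by positivity)]
          linear_combination (-2 * Real.sqrt θ) * (Real.sq_sqrt hx0)
      exact ContinuousOn.congr
        ((Real.continuous_arcsin.comp (Real.continuous_sqrt.div_const (2 * Real.sqrt θ))).continuousOn)
        heq
    · have hs1 : Real.sqrt t ≠ 1 := fun h => h1 (by rw [← Real.sq_sqrt ht.le, h]; norm_num)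
      have ha : 0 < θ * (Real.sqrt t - 1) ^ 2 := by
        have : Real.sqrt t - 1 ≠ 0 := sub_ne_zero.2 hs1
        positivity
      apply Real.continuous_arcsin.comp_continuousOn
      apply ContinuousOn.div ((continuous_id.add continuous_const).continuousOn)
        ((continuous_const.mul (Continuous.sqrt (by continuity))).continuousOn)
      intro x hx
      have hxpos : 0 < x := lt_of_lt_of_le ha hx.1
      have : 0 < Real.sqrt (θ * t * x) := Real.sqrt_pos.2 (by positivity)
      exact (mul_pos two_pos this).ne'
  have c2 : Continuous (fun x : ℝ => θ * Real.arcsin ((x - θ * (t + 1)) / (2 * θ * Real.sqrt t))) :=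
    continuous_const.mul (Real.continuous_arcsin.comp
      ((continuous_id.sub continuous_const).div_const (2 * θ * Real.sqrt t)))
  have c3 : Continuous (fun x : ℝ => Real.sqrt (4 * θ * t * x - (x + θ * (t - 1)) ^ 2) / 2) :=
    (Continuous.sqrt (by continuity)).div_const 2
  exact ((continuousOn_id.mul (continuousOn_const.sub harc)).add c2.continuousOn).sub
    c3.continuousOn

/-- The equilibrium density `f_t` is a probability density supported on `[0, θ(1+√t)²]`. -/
theorem equilibrium_density_is_probability
    (θ t : ℝ) (hθ : 0 < θ) (ht : 0 < t) :
    (∫ x : ℝ, eqDensity θ t x) = 1 ∧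
    (∀ x : ℝ, 0 ≤ eqDensity θ t x) ∧
    (∀ x : ℝ, x ∉ Set.Icc (0 : ℝ) (θ * (1 + Real.sqrt t) ^ 2) → eqDensity θ t x = 0) := by
  have hr : 0 < Real.sqrt t := Real.sqrt_pos.2 ht
  have hr2 : Real.sqrt t ^ 2 = t := Real.sq_sqrt ht.le
  set a := θ * (Real.sqrt t - 1) ^ 2 with hadef
  set b := θ * (Real.sqrt t + 1) ^ 2 with hbdef
  have h0a : (0:ℝ) ≤ a := by positivity
  have h0b : (0:ℝ) ≤ b := by positivity
  have hab : a ≤ b := by nlinarith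
  have hb' : θ * (1 + Real.sqrt t) ^ 2 = b := by rw [hbdef]; ring
  -- part 3
  have part3 : ∀ x : ℝ, x ∉ Set.Icc (0 : ℝ) (θ * (1 + Real.sqrt t) ^ 2) → eqDensity θ t x = 0 := by
    intro x hx
    rw [Set.mem_Icc, not_and_or] at hx
    unfold eqDensity
    rcases hx with hx | hx
    · push_neg at hx
      rw [if_neg (fun h => by linarith [h.1]), if_neg (fun h => by linarith [h.2.1])]
    · push_neg at hx
      rw [hb'] at hx
      rw [if_neg (fun h => by linarith [h.2]), if_neg (fun h => by linarith [h.2.2])]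
  -- part 2
  have part2 : ∀ x : ℝ, 0 ≤ eqDensity θ t x := by
    intro x
    unfold eqDensity
    split_ifs with h1 h2
    · have := Real.arctan_lt_pi_div_two
        ((x + θ * (t - 1)) / Real.sqrt (4 * θ * t * x - (x + θ * (t - 1)) ^ 2))
      have h0 : (0:ℝ) ≤ (θ * Real.pi)⁻¹ := by positivity
      exact mul_nonneg h0 (by linarith)
    · positivity
    · exact le_refl 0
  refine ⟨?_, part2, part3⟩
  -- bound
  have hbound : ∀ x : ℝ, eqDensity θ t x ≤ θ⁻¹ := by
    intro x
    unfold eqDensity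
    split_ifs with h1 h2
    · have := Real.neg_pi_div_two_lt_arctan
        ((x + θ * (t - 1)) / Real.sqrt (4 * θ * t * x - (x + θ * (t - 1)) ^ 2))
      calc (θ * Real.pi)⁻¹ * (Real.pi / 2 -
            Real.arctan ((x + θ * (t - 1)) / Real.sqrt (4 * θ * t * x - (x + θ * (t - 1)) ^ 2)))
          ≤ (θ * Real.pi)⁻¹ * Real.pi := by
            apply mul_le_mul_of_nonneg_left (by linarith) (by positivity)
        _ = θ⁻¹ := by
            rw [mul_inv]
            field_simp
    · exact le_refl _
    · positivity
  -- measurability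
  have hmeas : Measurable (eqDensity θ t) := by
    unfold eqDensity
    refine Measurable.ite ?_ ?_ (Measurable.ite ?_ measurable_const measurable_const)
    · exact measurableSet_Ioo
    · apply Measurable.const_mul
      apply Measurable.const_sub
      apply Real.continuous_arctan.measurable.comp
      exact ((continuous_id.add continuous_const).measurable).div
        (Continuous.sqrt (by continuity)).measurable
    · by_cases h : t < 1
      · simp only [h, true_and]
        exact measurableSet_Icc
      · simp only [h, false_and]
        exact MeasurableSet.empty
  -- integrability
  have hInt : IntegrableOn (eqDensity θ t) (Set.Icc (0:ℝ) b) := by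
    refine Integrable.mono' (g := fun _ => θ⁻¹)
      (integrableOn_const measure_Icc_lt_top.ne)
      hmeas.aestronglyMeasurable.restrict ?_
    filter_upwards with x
    rw [Real.norm_eq_abs, abs_of_nonneg (part2 x)]
    exact hbound x
  have hint1 : IntervalIntegrable (eqDensity θ t) volume 0 a :=
    (intervalIntegrable_iff_integrableOn_Ioc_of_le h0a).2
      (hInt.mono_set (Set.Ioc_subset_Icc_self.trans (Set.Icc_subset_Icc_right hab)))
  have hint2 : IntervalIntegrable (eqDensity θ t) volume a b :=
    (intervalIntegrable_iff_integrableOn_Ioc_of_le hab).2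
      (hInt.mono_set (Set.Ioc_subset_Icc_self.trans (Set.Icc_subset_Icc_left h0a)))
  have key : (∫ x : ℝ, eqDensity θ t x)
      = (∫ x in (0:ℝ)..a, eqDensity θ t x) + ∫ x in a..b, eqDensity θ t x := by
    rw [intervalIntegral.integral_add_adjacent_intervals hint1 hint2,
      intervalIntegral.integral_of_le h0b, ← integral_Icc_eq_integral_Ioc]
    exact (setIntegral_eq_integral_of_forall_compl_eq_zero
      (fun x hx => part3 x (by rwa [hb']))).symm
  -- first piece
  have piece1 : (∫ x in (0:ℝ)..a, eqDensity θ t x) = if t < 1 then a / θ else 0 := by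
    by_cases hlt : t < 1
    · rw [if_pos hlt]
      rw [intervalIntegral.integral_congr (g := fun _ => θ⁻¹) ?_]
      · rw [intervalIntegral.integral_const, smul_eq_mul]
        field_simp
        ring
      · intro x hx
        rw [Set.uIcc_of_le h0a] at hx
        unfold eqDensity
        rw [if_neg (fun h => absurd h.1 (not_lt.2 hx.2)), if_pos ⟨hlt, hx.1, hx.2⟩]
    · rw [if_neg hlt]
      rw [intervalIntegral.integral_congr (g := fun _ => (0:ℝ)) ?_]
      · simp
      · intro x hx
        rw [Set.uIcc_of_le h0a] at hx
        unfold eqDensity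
        rw [if_neg (fun h => absurd h.1 (not_lt.2 hx.2)), if_neg (fun h => hlt h.1)]
  -- second piece via FTC
  have piece2 : (∫ x in a..b, eqDensity θ t x)
      = (θ * Real.pi)⁻¹ * eqF θ t b - (θ * Real.pi)⁻¹ * eqF θ t a := by
    refine intervalIntegral.integral_eq_sub_of_hasDeriv_right_of_le hab
      (continuousOn_const.mul (eqF_continuousOn hθ ht)) (fun x hx => ?_) hint2
    have hd := ((eqF_hasDerivAt hθ ht hx).const_mul ((θ * Real.pi)⁻¹)).hasDerivWithinAt
      (s := Set.Ioi x)
    have hx' : eqDensity θ t x = (θ * Real.pi)⁻¹ *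
        (Real.pi / 2 - Real.arctan ((x + θ * (t - 1)) /
          Real.sqrt (4 * θ * t * x - (x + θ * (t - 1)) ^ 2))) := by
      unfold eqDensity
      rw [if_pos ⟨hx.1, hx.2⟩]
    rw [hx']
    exact hd
  -- endpoint values
  have hFb : eqF θ t b = θ * Real.pi / 2 := by
    have := eqF_right θ (Real.sqrt t) hθ hr
    rwa [hr2] at this
  have hFa : eqF θ t a = (if t < 1 then a * Real.pi else 0) - θ * Real.pi / 2 := by
    by_cases hlt : t < 1
    · rw [if_pos hlt]
      have hrlt : Real.sqrt t < 1 := by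
        nlinarith [hr2, hr]
      have := eqF_left_lt θ (Real.sqrt t) hθ hr hrlt
      rw [hr2] at this
      rw [this]
    · rw [if_neg hlt]
      have hrge : 1 ≤ Real.sqrt t := by
        nlinarith [hr2, hr, not_lt.1 hlt]
      have := eqF_left_ge θ (Real.sqrt t) hθ hrge
      rw [hr2] at this
      rw [this]
      ring
  rw [key, piece1, piece2, hFb, hFa]
  have hπ : Real.pi ≠ 0 := Real.pi_ne_zero
  by_cases hlt : t < 1
  · rw [if_pos hlt, if_pos hlt]
    field_simp
    ring
  · rw [if_neg hlt, if_neg hlt]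
    field_simp
    ring

end
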